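/- Define modal CNF formulas by: literal ::= p | ¬p | □clause | ◇cnf; clause ::= disjunction of literals (possibly ⊥); cnf ::= conjunction of clauses. For every modal CNF formula φ whose only occurrences of ⊥ are inside subformulas of the form □⊥: if φ is satisfiable in some Kripke model, then φ is satisfiable in a Kripke model whose set of worlds is finite. -/
import Mathlib


inductive ModalFormula (P : Type) : Type
  | var : P → ModalFormula P
  | bot : ModalFormula P
  | neg : ModalFormula P → ModalFormula P
  | or : ModalFormula P → ModalFormula P → ModalFormula P
  | and : ModalFormula P → ModalFormula P → ModalFormula P
  | dia : ModalFormula P → ModalFormula P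
  | box : ModalFormula P → ModalFormula P

structure KripkeModel (P : Type) where
  W : Type
  R : W → W → Prop
  V : W → P → Bool

def Sat {P : Type} (M : KripkeModel P) : M.W → ModalFormula P → Prop
  | w, .var p => M.V w p = true
  | _, .bot => False
  | w, .neg φ => ¬ Sat M w φ
  | w, .or φ ψ => Sat M w φ ∨ Sat M w ψ
  | w, .and φ ψ => Sat M w φ ∧ Sat M w ψ
  | w, .dia φ => ∃ v, M.R w v ∧ Sat M v φ
  | w, .box φ => ∀ v, M.R w v → Sat M v φ

mutual
  /-- literal ::= p | ¬p | □clause | ◇cnf -/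
  inductive IsLiteral {P : Type} : ModalFormula P → Prop
    | pos (p : P) : IsLiteral (.var p)
    | neg (p : P) : IsLiteral (.neg (.var p))
    | box {c : ModalFormula P} : IsClause c → IsLiteral (.box c)
    | dia {f : ModalFormula P} : IsCNF f → IsLiteral (.dia f)

  /-- clause ::= literal | clause ∨ clause | ⊥ -/
  inductive IsClause {P : Type} : ModalFormula P → Prop
    | bot : IsClause .bot
    | lit {l : ModalFormula P} : IsLiteral l → IsClause l
    | or {c₁ c₂ : ModalFormula P} : IsClause c₁ → IsClause c₂ → IsClause (.or c₁ c₂)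

  /-- cnf ::= clause | cnf ∧ cnf -/
  inductive IsCNF {P : Type} : ModalFormula P → Prop
    | clause {c : ModalFormula P} : IsClause c → IsCNF c
    | and {f g : ModalFormula P} : IsCNF f → IsCNF g → IsCNF (.and f g)
end

/-- ⊥ occurs only inside subformulas of the form □⊥ -/
def BotOnlyUnderBox {P : Type} : ModalFormula P → Prop
  | .var _ => True
  | .bot => False
  | .neg φ => BotOnlyUnderBox φ
  | .or φ ψ => BotOnlyUnderBox φ ∧ BotOnlyUnderBox ψ
  | .and φ ψ => BotOnlyUnderBox φ ∧ BotOnlyUnderBox ψ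
  | .dia φ => BotOnlyUnderBox φ
  | .box .bot => True
  | .box φ => BotOnlyUnderBox φ

def subf {P : Type} : ModalFormula P → List (ModalFormula P)
  | .var p => [.var p]
  | .bot => [.bot]
  | .neg ψ => .neg ψ :: subf ψ
  | .or ψ χ => .or ψ χ :: (subf ψ ++ subf χ)
  | .and ψ χ => .and ψ χ :: (subf ψ ++ subf χ)
  | .dia ψ => .dia ψ :: subf ψ
  | .box ψ => .box ψ :: subf ψ

lemma self_mem_subf {P : Type} (ψ : ModalFormula P) : ψ ∈ subf ψ := by
  cases ψ <;> simp [subf]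

lemma subf_trans {P : Type} (φ : ModalFormula P) :
    ∀ ψ ∈ subf φ, subf ψ ⊆ subf φ := by
  induction φ with
  | var p => intro ψ h; simp [subf] at h; subst h; exact fun _ h => h
  | bot => intro ψ h; simp [subf] at h; subst h; exact fun _ h => h
  | neg χ ih =>
      intro ψ h
      rcases (by simpa [subf] using h) with h | h
      · subst h; exact fun _ h => h
      · exact fun x hx => by
          simp [subf]; right; exact ih ψ h hx
  | or χ₁ χ₂ ih₁ ih₂ =>
      intro ψ h
      rcases (by simpa [subf] using h) with h | h | h
      · subst h; exact fun _ h => h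
      · exact fun x hx => by simp [subf]; right; left; exact ih₁ ψ h hx
      · exact fun x hx => by simp [subf]; right; right; exact ih₂ ψ h hx
  | and χ₁ χ₂ ih₁ ih₂ =>
      intro ψ h
      rcases (by simpa [subf] using h) with h | h | h
      · subst h; exact fun _ h => h
      · exact fun x hx => by simp [subf]; right; left; exact ih₁ ψ h hx
      · exact fun x hx => by simp [subf]; right; right; exact ih₂ ψ h hx
  | dia χ ih =>
      intro ψ h
      rcases (by simpa [subf] using h) with h | h
      · subst h; exact fun _ h => h
      · exact fun x hx => by simp [subf]; right; exact ih ψ h hx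
  | box χ ih =>
      intro ψ h
      rcases (by simpa [subf] using h) with h | h
      · subst h; exact fun _ h => h
      · exact fun x hx => by simp [subf]; right; exact ih ψ h hx

theorem modal_cnf_finite_model_property' {P : Type} (φ : ModalFormula P)
    (hSat : ∃ (M : KripkeModel P) (w : M.W), Sat M w φ) :
    ∃ (M : KripkeModel P), Finite M.W ∧ ∃ w : M.W, Sat M w φ := by
  classical
  obtain ⟨M, w₀, hw₀⟩ := hSat
  set l := subf φ with hl
  let θ : M.W → (Fin l.length → Prop) := fun w i => Sat M w (l.get i)
  -- agreement lemma
  have agree : ∀ {u v : M.W}, θ u = θ v → ∀ ψ ∈ l, (Sat M u ψ ↔ Sat M v ψ) := by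
    intro u v h ψ hψ
    obtain ⟨i, hi⟩ := List.mem_iff_get.mp hψ
    have := congrFun h i
    simp only [θ] at this
    rw [hi] at this
    exact this ▸ Iff.rfl
  let M' : KripkeModel P :=
    { W := Fin l.length → Prop
      R := fun a b => ∃ u v, θ u = a ∧ θ v = b ∧ M.R u v
      V := fun a p => decide (∃ i : Fin l.length, l.get i = .var p ∧ a i) }
  have truth : ∀ ψ : ModalFormula P, ψ ∈ l → ∀ u : M.W, (Sat M' (θ u) ψ ↔ Sat M u ψ) := by
    intro ψ
    induction ψ with
    | var p =>
        intro hmem u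
        show (decide (∃ i : Fin l.length, l.get i = .var p ∧ θ u i) = true) ↔ _
        rw [decide_eq_true_iff]
        constructor
        · rintro ⟨i, hi, hs⟩
          have hs' : Sat M u (l.get i) := hs
          rw [hi] at hs'
          exact hs'
        · intro h
          obtain ⟨i, hi⟩ := List.mem_iff_get.mp hmem
          refine ⟨i, hi, ?_⟩
          show Sat M u (l.get i)
          rw [hi]
          exact h
    | bot => intro _ u; exact Iff.rfl
    | neg χ ih =>
        intro hmem u
        have hχ : χ ∈ l := subf_trans φ _ hmem (by simp [subf, self_mem_subf])
        simpa [Sat] using not_congr (ih hχ u)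
    | or χ₁ χ₂ ih₁ ih₂ =>
        intro hmem u
        have h1 : χ₁ ∈ l := subf_trans φ _ hmem (by simp [subf, self_mem_subf])
        have h2 : χ₂ ∈ l := subf_trans φ _ hmem (by simp [subf, self_mem_subf])
        simpa [Sat] using or_congr (ih₁ h1 u) (ih₂ h2 u)
    | and χ₁ χ₂ ih₁ ih₂ =>
        intro hmem u
        have h1 : χ₁ ∈ l := subf_trans φ _ hmem (by simp [subf, self_mem_subf])
        have h2 : χ₂ ∈ l := subf_trans φ _ hmem (by simp [subf, self_mem_subf])
        simpa [Sat] using and_congr (ih₁ h1 u) (ih₂ h2 u)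
    | dia χ ih =>
        intro hmem u
        have hχ : χ ∈ l := subf_trans φ _ hmem (by simp [subf, self_mem_subf])
        constructor
        · rintro ⟨b, ⟨x, v, hx, hv, hR⟩, hb⟩
          have hvχ : Sat M v χ := (ih hχ v).mp (hv ▸ hb)
          have hx' : Sat M x (.dia χ) := ⟨v, hR, hvχ⟩
          exact (agree hx _ hmem).mp hx'
        · rintro ⟨v, hR, hv⟩
          exact ⟨θ v, ⟨u, v, rfl, rfl, hR⟩, (ih hχ v).mpr hv⟩
    | box χ ih =>
        intro hmem u
        have hχ : χ ∈ l := subf_trans φ _ hmem (by simp [subf, self_mem_subf])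
        constructor
        · intro h v hR
          have := h (θ v) ⟨u, v, rfl, rfl, hR⟩
          exact (ih hχ v).mp this
        · rintro h b ⟨x, v, hx, hv, hR⟩
          have hxb : Sat M x (.box χ) := (agree hx _ hmem).mpr h
          exact hv ▸ (ih hχ v).mpr (hxb v hR)
  refine ⟨M', ?_, θ w₀, (truth φ (self_mem_subf φ) w₀).mpr hw₀⟩
  show Finite (Fin l.length → Prop)
  infer_instance


theorem modal_cnf_finite_model_property {P : Type} (φ : ModalFormula P)
    (hCNF : IsCNF φ) (hBot : BotOnlyUnderBox φ)
    (hSat : ∃ (M : KripkeModel P) (w : M.W), Sat M w φ) :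
    ∃ (M : KripkeModel P), Finite M.W ∧ ∃ w : M.W, Sat M w φ := modal_cnf_finite_model_property' φ hSat
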